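/- arXiv:1609.03175 — 3 statements merged into one kernel-verified Lean document; each statement's English description precedes it below -/
import Mathlib

section
/- For any angle φ and real σψ, the half-line integral ∫₀^∞ f(RΦ(φ) − rΦ(φ−σψ)) e^{−μr} dr equals e^{−μR cos ψ} · (T_{−μ}f)(π/2 + φ − σψ, σR sin ψ), where Φ(α) = (cos α, sin α), Φ(α)^⊥ = (−sin α, cos α), and (T_{−μ}f)(α,s) := ∫_ℝ f(sΦ(α) + tΦ(α)^⊥) e^{−μt} dt. -/
open Real MeasureTheory

/-- The rotated unit vector `Φ(α) = (cos α, sin α)`. -/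
noncomputable def Phi (α : ℝ) : ℝ × ℝ := (Real.cos α, Real.sin α)

/-- The perpendicular vector `Φ(α)^⊥ = (−sin α, cos α)`. -/
noncomputable def PhiPerp (α : ℝ) : ℝ × ℝ := (-Real.sin α, Real.cos α)

/-- The exponential Radon transform `(T_{−μ} f)(α, s) = ∫ f(sΦ(α) + tΦ(α)^⊥) e^{−μ t} dt`. -/
noncomputable def expRadonNeg (μ : ℝ) (f : ℝ × ℝ → ℝ) (α s : ℝ) : ℝ :=
  ∫ t : ℝ, f (s • Phi α + t • PhiPerp α) * Real.exp (-μ * t)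

lemma aux_halfline (R μ : ℝ) (f : ℝ × ℝ → ℝ)
    (hsupp : tsupport f ⊆ {x : ℝ × ℝ | x.1 ^ 2 + x.2 ^ 2 < R ^ 2})
    (α s c : ℝ) (hc : 0 ≤ c) (hsc : R ^ 2 ≤ s ^ 2 + c ^ 2) :
    (∫ r in Set.Ioi (0 : ℝ), f (s • Phi α + (r - c) • PhiPerp α) * Real.exp (-μ * r))
      = Real.exp (-μ * c) * expRadonNeg μ f α s := by
  have hzero : ∀ t : ℝ, t ≤ -c → f (s • Phi α + t • PhiPerp α) = 0 := by
    intro t ht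
    apply image_eq_zero_of_notMem_tsupport
    intro hmem
    have h1 := hsupp hmem
    simp only [Set.mem_setOf_eq, Phi, PhiPerp, Prod.smul_mk, Prod.mk_add_mk, smul_eq_mul] at h1
    have h2 : (s * cos α + t * -sin α) ^ 2 + (s * sin α + t * cos α) ^ 2 = s ^ 2 + t ^ 2 := by
      linear_combination (s ^ 2 + t ^ 2) * sin_sq_add_cos_sq α
    nlinarith
  have key : ∀ r : ℝ, f (s • Phi α + (r - c) • PhiPerp α) * Real.exp (-μ * r)
      = Real.exp (-μ * c) *
        (f (s • Phi α + (r - c) • PhiPerp α) * Real.exp (-μ * (r - c))) := by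
    intro r
    rw [mul_comm (Real.exp (-μ * c)), mul_assoc, ← Real.exp_add]
    ring_nf
  calc (∫ r in Set.Ioi (0 : ℝ), f (s • Phi α + (r - c) • PhiPerp α) * Real.exp (-μ * r))
      = ∫ r in Set.Ioi (0 : ℝ), Real.exp (-μ * c) *
          (f (s • Phi α + (r - c) • PhiPerp α) * Real.exp (-μ * (r - c))) := by
        simp_rw [key]
    _ = Real.exp (-μ * c) * ∫ r in Set.Ioi (0 : ℝ),
          f (s • Phi α + (r - c) • PhiPerp α) * Real.exp (-μ * (r - c)) :=
        integral_const_mul _ _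
    _ = Real.exp (-μ * c) * ∫ r : ℝ,
          f (s • Phi α + (r - c) • PhiPerp α) * Real.exp (-μ * (r - c)) := by
        congr 1
        apply setIntegral_eq_integral_of_forall_compl_eq_zero
        intro r hr
        simp only [Set.mem_Ioi, not_lt] at hr
        rw [hzero (r - c) (by linarith), zero_mul]
    _ = Real.exp (-μ * c) * expRadonNeg μ f α s := by
        congr 1
        exact integral_sub_right_eq_self
          (fun t => f (s • Phi α + t • PhiPerp α) * Real.exp (-μ * t)) c

theorem halfline_integral_eq_expRadon
    (R μ : ℝ) (hR : 0 < R) (f : ℝ × ℝ → ℝ)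
    (hf : ContDiff ℝ (⊤ : ℕ∞) f) (hsupp : tsupport f ⊆ {x : ℝ × ℝ | x.1 ^ 2 + x.2 ^ 2 < R ^ 2})
    (φ ψ σ : ℝ) (hσ : σ = 1 ∨ σ = -1)
    (hφ : φ ∈ Set.Ico 0 (2 * π)) (hψ : ψ ∈ Set.Ioo 0 (π / 2)) :
    (∫ r in Set.Ioi (0 : ℝ),
        f (R • Phi φ - r • Phi (φ - σ * ψ)) * Real.exp (-μ * r)) =
      Real.exp (-μ * R * Real.cos ψ) *
        expRadonNeg μ f (π / 2 + φ - σ * ψ) (σ * R * Real.sin ψ) := by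
  have hψ1 : 0 < ψ := hψ.1
  have hψ2 : ψ < π / 2 := hψ.2
  have hcos : 0 ≤ Real.cos ψ := Real.cos_nonneg_of_mem_Icc
    ⟨by linarith [pi_pos], le_of_lt hψ2⟩
  have hpoint : ∀ r : ℝ, R • Phi φ - r • Phi (φ - σ * ψ)
      = (σ * R * Real.sin ψ) • Phi (π / 2 + φ - σ * ψ)
        + (r - R * Real.cos ψ) • PhiPerp (π / 2 + φ - σ * ψ) := by
    intro r
    have hs := sin_sq_add_cos_sq ψ
    rcases hσ with h | h <;> subst h
    all_goals
      simp only [Phi, PhiPerp, Prod.smul_mk, Prod.mk_add_mk, Prod.mk_sub_mk, smul_eq_mul,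
        Prod.mk.injEq]
    all_goals constructor
    all_goals simp [Real.cos_sub, Real.sin_sub, Real.cos_add, Real.sin_add]
    · linear_combination (-R * Real.cos φ) * hs
    · linear_combination (-R * Real.sin φ) * hs
    · linear_combination (-R * Real.cos φ) * hs
    · linear_combination (-R * Real.sin φ) * hs
  have hsc : R ^ 2 ≤ (σ * R * Real.sin ψ) ^ 2 + (R * Real.cos ψ) ^ 2 := by
    rcases hσ with h | h <;> subst h <;>
      nlinarith [sin_sq_add_cos_sq ψ]
  have hRcos : -μ * R * Real.cos ψ = -μ * (R * Real.cos ψ) := by ring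
  rw [hRcos]
  rw [show (∫ r in Set.Ioi (0 : ℝ),
        f (R • Phi φ - r • Phi (φ - σ * ψ)) * Real.exp (-μ * r))
      = ∫ r in Set.Ioi (0 : ℝ),
        f ((σ * R * Real.sin ψ) • Phi (π / 2 + φ - σ * ψ)
          + (r - R * Real.cos ψ) • PhiPerp (π / 2 + φ - σ * ψ)) * Real.exp (-μ * r) by
    simp_rw [hpoint]]
  exact aux_halfline R μ f hsupp _ _ _ (by positivity) hsc
end

section
/- The attenuated V-line transform satisfies (V_μ f)(φ,ψ) = e^{−μR cos ψ} · Σ_{σ=±1} (T_{−μ}f)(π/2 + φ − σψ, σR sin ψ). -/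
open Real MeasureTheory

/-- The attenuated V-line transform
`(V_μ f)(φ, ψ) = Σ_{σ = ±1} ∫₀^∞ f(RΦ(φ) − rΦ(φ − σψ)) e^{−μ r} dr`. -/
noncomputable def Vline (R μ : ℝ) (f : ℝ × ℝ → ℝ) (φ ψ : ℝ) : ℝ :=
  (∫ r in Set.Ioi (0 : ℝ), f (R • Phi φ - r • Phi (φ - ψ)) * Real.exp (-μ * r)) +
  (∫ r in Set.Ioi (0 : ℝ), f (R • Phi φ - r • Phi (φ + ψ)) * Real.exp (-μ * r))

/-- Polarization identity for the squared norm of `RΦ(a) − rΦ(b)`. -/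
lemma vline_norm_sq_eq (R r a b : ℝ) :
    (R * Real.cos a - r * Real.cos b) ^ 2 + (R * Real.sin a - r * Real.sin b) ^ 2
      = R ^ 2 + r ^ 2 - 2 * R * r * Real.cos (a - b) := by
  rw [Real.cos_sub]
  have ha := Real.sin_sq_add_cos_sq a
  have hb := Real.sin_sq_add_cos_sq b
  linear_combination R ^ 2 * ha + r ^ 2 * hb

/-- A half-line integral extends to a full-line integral (the integrand vanishes for `r ≤ 0`),
and a translation substitution pulls out an exponential factor. -/
lemma vline_half_line (R μ : ℝ) (hR : 0 < R) (f : ℝ × ℝ → ℝ)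
    (hsupp : tsupport f ⊆ {x : ℝ × ℝ | x.1 ^ 2 + x.2 ^ 2 < R ^ 2})
    (φ β ψ : ℝ) (hc : 0 < Real.cos ψ) (hβ : Real.cos (φ - β) = Real.cos ψ) :
    (∫ r in Set.Ioi (0 : ℝ), f (R • Phi φ - r • Phi β) * Real.exp (-μ * r))
      = Real.exp (-μ * R * Real.cos ψ) *
        ∫ t : ℝ, f (R • Phi φ - (t + R * Real.cos ψ) • Phi β) * Real.exp (-μ * t) := by
  have hvan : ∀ r : ℝ, r ≤ 0 → f (R • Phi φ - r • Phi β) = 0 := by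
    intro r hr
    apply image_eq_zero_of_notMem_tsupport
    intro hmem
    have h1 := hsupp hmem
    simp only [Set.mem_setOf_eq, Phi, Prod.smul_mk, smul_eq_mul, Prod.mk_sub_mk,
      Prod.fst, Prod.snd] at h1
    rw [vline_norm_sq_eq R r φ β, hβ] at h1
    nlinarith [sq_nonneg r, mul_nonneg (mul_nonneg (le_of_lt hR) (neg_nonneg.2 hr)) hc.le]
  have h1 : (∫ r in Set.Ioi (0 : ℝ), f (R • Phi φ - r • Phi β) * Real.exp (-μ * r))
      = ∫ r : ℝ, f (R • Phi φ - r • Phi β) * Real.exp (-μ * r) := by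
    apply MeasureTheory.setIntegral_eq_integral_of_forall_compl_eq_zero
    intro r hr
    simp only [Set.mem_Ioi, not_lt] at hr
    rw [hvan r hr, zero_mul]
  rw [h1, ← MeasureTheory.integral_const_mul]
  rw [← MeasureTheory.integral_add_right_eq_self
    (fun r : ℝ => f (R • Phi φ - r • Phi β) * Real.exp (-μ * r)) (R * Real.cos ψ)]
  congr 1
  ext t
  rw [show -μ * (t + R * Real.cos ψ) = -μ * R * Real.cos ψ + -μ * t by ring, Real.exp_add]
  ring

theorem Vline_eq_sum_expRadon
    (R μ : ℝ) (hR : 0 < R) (f : ℝ × ℝ → ℝ)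
    (hf : ContDiff ℝ (⊤ : ℕ∞) f) (hsupp : tsupport f ⊆ {x : ℝ × ℝ | x.1 ^ 2 + x.2 ^ 2 < R ^ 2})
    (φ ψ : ℝ) (hφ : φ ∈ Set.Ico 0 (2 * π)) (hψ : ψ ∈ Set.Ioo 0 (π / 2)) :
    Vline R μ f φ ψ =
      Real.exp (-μ * R * Real.cos ψ) *
        (expRadonNeg μ f (π / 2 + φ - ψ) (R * Real.sin ψ) +
          expRadonNeg μ f (π / 2 + φ + ψ) (-(R * Real.sin ψ))) := by
  have hc : 0 < Real.cos ψ := Real.cos_pos_of_mem_Ioo ⟨by linarith [hψ.1, Real.pi_pos], hψ.2⟩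
  have hpt1 : ∀ t : ℝ, (R * Real.sin ψ) • Phi (π / 2 + φ - ψ) + t • PhiPerp (π / 2 + φ - ψ)
      = R • Phi φ - (t + R * Real.cos ψ) • Phi (φ - ψ) := by
    intro t
    simp only [Phi, PhiPerp, Prod.smul_mk, smul_eq_mul, Prod.mk_add_mk, Prod.mk_sub_mk,
      Real.cos_sub, Real.sin_sub, Real.cos_add, Real.sin_add, Real.cos_pi_div_two,
      Real.sin_pi_div_two, Prod.mk.injEq]
    constructor
    · linear_combination R * Real.cos φ * Real.sin_sq_add_cos_sq ψ
    · linear_combination R * Real.sin φ * Real.sin_sq_add_cos_sq ψ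
  have hpt2 : ∀ t : ℝ, (-(R * Real.sin ψ)) • Phi (π / 2 + φ + ψ) + t • PhiPerp (π / 2 + φ + ψ)
      = R • Phi φ - (t + R * Real.cos ψ) • Phi (φ + ψ) := by
    intro t
    simp only [Phi, PhiPerp, Prod.smul_mk, smul_eq_mul, Prod.mk_add_mk, Prod.mk_sub_mk,
      Real.cos_add, Real.sin_add, Real.cos_pi_div_two, Real.sin_pi_div_two, Prod.mk.injEq]
    constructor
    · linear_combination R * Real.cos φ * Real.sin_sq_add_cos_sq ψ
    · linear_combination R * Real.sin φ * Real.sin_sq_add_cos_sq ψ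
  have hrad1 : expRadonNeg μ f (π / 2 + φ - ψ) (R * Real.sin ψ)
      = ∫ t : ℝ, f (R • Phi φ - (t + R * Real.cos ψ) • Phi (φ - ψ)) * Real.exp (-μ * t) := by
    unfold expRadonNeg
    exact integral_congr_ae (Filter.Eventually.of_forall fun t => by simp only [hpt1 t])
  have hrad2 : expRadonNeg μ f (π / 2 + φ + ψ) (-(R * Real.sin ψ))
      = ∫ t : ℝ, f (R • Phi φ - (t + R * Real.cos ψ) • Phi (φ + ψ)) * Real.exp (-μ * t) := by
    unfold expRadonNeg
    exact integral_congr_ae (Filter.Eventually.of_forall fun t => by simp only [hpt2 t])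
  have hβ1 : Real.cos (φ - (φ - ψ)) = Real.cos ψ := by ring_nf
  have hβ2 : Real.cos (φ - (φ + ψ)) = Real.cos ψ := by
    rw [show φ - (φ + ψ) = -ψ by ring, Real.cos_neg]
  unfold Vline
  rw [vline_half_line R μ hR f hsupp φ (φ - ψ) ψ hc hβ1,
    vline_half_line R μ hR f hsupp φ (φ + ψ) ψ hc hβ2, hrad1, hrad2, mul_add]
end

section
/- For every n ∈ ℤ and s ∈ ℝ with |s| < R, the n-th angular Fourier coefficient of the exponential Radon transform satisfies (T_{−μ}f)_n(s) = Σ_{σ=±1} ∫_{|s|}^R f_n(r) e^{σμ√(r²−s²)} e^{−i n σ arccos(s/r)} · r/√(r²−s²) dr, where f_n(r) = (1/2π)∫₀^{2π} f(rΦ(φ)) e^{−inφ} dφ and (T_{−μ}f)_n(s) = (1/2π)∫₀^{2π} (T_{−μ}f)(α,s) e^{−inα} dα. -/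
open Real MeasureTheory

/-- The exponential Radon transform `(T_{−μ} f)(α, s) = ∫ f(sΦ(α) + tΦ(α)^⊥) e^{−μ t} dt`. -/
noncomputable def expRadonNegC (μ : ℝ) (f : ℝ × ℝ → ℂ) (α s : ℝ) : ℂ :=
  ∫ t : ℝ, f (s • Phi α + t • PhiPerp α) * (Real.exp (-μ * t) : ℂ)

/-- `n`-th angular Fourier coefficient of `f`: `f_n(r) = (1/2π) ∫₀^{2π} f(rΦ(φ)) e^{−i n φ} dφ`. -/
noncomputable def angCoeff (f : ℝ × ℝ → ℂ) (n : ℤ) (r : ℝ) : ℂ :=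
  (1 / (2 * (π : ℂ))) * ∫ φ in (0 : ℝ)..(2 * π), f (r • Phi φ) * Complex.exp (-Complex.I * n * φ)

/-- `n`-th angular Fourier coefficient of the exponential Radon transform. -/
noncomputable def radonCoeff (μ : ℝ) (f : ℝ × ℝ → ℂ) (n : ℤ) (s : ℝ) : ℂ :=
  (1 / (2 * (π : ℂ))) *
    ∫ α in (0 : ℝ)..(2 * π), expRadonNegC μ f α s * Complex.exp (-Complex.I * n * α)

lemma Phi_cont : Continuous Phi := by unfold Phi; fun_prop
lemma PhiPerp_cont : Continuous PhiPerp := by unfold PhiPerp; fun_prop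

noncomputable def Fco (f : ℝ × ℝ → ℂ) (n : ℤ) (r : ℝ) : ℂ :=
  ∫ φ in (0:ℝ)..(2*π), f (r • Phi φ) * Complex.exp (-Complex.I * n * φ)

lemma periodic_g (f : ℝ × ℝ → ℂ) (n : ℤ) (r : ℝ) :
    Function.Periodic (fun φ => f (r • Phi φ) * Complex.exp (-Complex.I * n * φ)) (2*π) := by
  intro x
  have h1 : Phi (x + 2*π) = Phi x := by
    simp [Phi, Real.cos_add_two_pi, Real.sin_add_two_pi]
  have h2 : Complex.exp (-Complex.I * n * ((x:ℝ) + 2*π)) = Complex.exp (-Complex.I * n * x) := by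
    rw [show (-Complex.I * n * ((x:ℝ) + 2*π) : ℂ) = -Complex.I*n*x + (-n : ℤ) * (2*π*Complex.I) by
      push_cast; ring, Complex.exp_add, Complex.exp_int_mul_two_pi_mul_I, mul_one]
  simp only [h1]
  rw [show ((x + 2*π : ℝ) : ℂ) = (x:ℂ) + 2*(π:ℂ) by push_cast; ring] at *
  rw [h2]

lemma shift (f : ℝ × ℝ → ℂ) (n : ℤ) (r θ : ℝ) :
    ∫ α in (0:ℝ)..(2*π), f (r • Phi (α + θ)) * Complex.exp (-Complex.I * n * α)
      = Complex.exp (Complex.I * n * θ) * Fco f n r := by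
  set g : ℝ → ℂ := fun φ => f (r • Phi φ) * Complex.exp (-Complex.I * n * φ) with hg
  have h1 : ∀ α : ℝ, f (r • Phi (α + θ)) * Complex.exp (-Complex.I * n * α)
      = g (α + θ) * Complex.exp (Complex.I * n * θ) := by
    intro α
    simp only [hg, mul_assoc, ← Complex.exp_add]
    congr 2
    push_cast; ring
  have hca : (∫ α in (0:ℝ)..(2*π), g (α + θ)) = ∫ φ in (0+θ)..(2*π+θ), g φ :=
    intervalIntegral.integral_comp_add_right (f := g) θ
  calc ∫ α in (0:ℝ)..(2*π), f (r • Phi (α + θ)) * Complex.exp (-Complex.I * n * α)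
      = (∫ α in (0:ℝ)..(2*π), g (α + θ)) * Complex.exp (Complex.I * n * θ) := by
        rw [← intervalIntegral.integral_mul_const]
        exact intervalIntegral.integral_congr (fun α _ => h1 α)
    _ = (∫ φ in θ..(θ + 2*π), g φ) * Complex.exp (Complex.I * n * θ) := by
        rw [hca, zero_add, show 2*π + θ = θ + 2*π by ring]
    _ = Complex.exp (Complex.I * n * θ) * Fco f n r := by
        rw [(periodic_g f n r).intervalIntegral_add_eq θ 0, zero_add, mul_comm]
        rfl

lemma point_eq (s t α : ℝ) :
    s • Phi α + t • PhiPerp α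
      = Real.sqrt (s^2 + t^2) • Phi (α + Complex.arg (s + t * Complex.I)) := by
  set z : ℂ := (s : ℂ) + t * Complex.I with hz
  have hre : z.re = s := by simp [hz]
  have him : z.im = t := by simp [hz]
  have habs : ‖z‖ = Real.sqrt (s^2 + t^2) := by
    rw [hz, Complex.norm_def, Complex.normSq_add_mul_I]
  have hcos : Real.sqrt (s^2 + t^2) * Real.cos (Complex.arg z) = s := by
    rw [← habs, Complex.norm_mul_cos_arg, hre]
  have hsin : Real.sqrt (s^2 + t^2) * Real.sin (Complex.arg z) = t := by
    rw [← habs, Complex.norm_mul_sin_arg, him]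
  simp only [Phi, PhiPerp, Prod.smul_mk, smul_eq_mul, Prod.mk_add_mk, Prod.mk.injEq]
  constructor
  · rw [Real.cos_add]; linear_combination (-Real.cos α) * hcos + Real.sin α * hsin
  · rw [Real.sin_add]; linear_combination (-Real.sin α) * hcos - Real.cos α * hsin

lemma normsq_point (s t α : ℝ) :
    (s • Phi α + t • PhiPerp α).1^2 + (s • Phi α + t • PhiPerp α).2^2 = s^2 + t^2 := by
  simp only [Phi, PhiPerp, Prod.smul_mk, smul_eq_mul, Prod.mk_add_mk]
  nlinarith [Real.sin_sq_add_cos_sq α]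

lemma f_vanish {R : ℝ} (f : ℝ × ℝ → ℂ)
    (hsupp : tsupport f ⊆ {x : ℝ × ℝ | x.1 ^ 2 + x.2 ^ 2 < R ^ 2})
    {x : ℝ × ℝ} (hx : R^2 ≤ x.1^2 + x.2^2) : f x = 0 :=
  image_eq_zero_of_notMem_tsupport (fun h => absurd (hsupp h) (not_lt.2 hx))

lemma Fco_vanish {R : ℝ} (f : ℝ × ℝ → ℂ)
    (hsupp : tsupport f ⊆ {x : ℝ × ℝ | x.1 ^ 2 + x.2 ^ 2 < R ^ 2}) (n : ℤ)
    {r : ℝ} (hr : R^2 ≤ r^2) : Fco f n r = 0 := by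
  unfold Fco
  have h : ∀ φ : ℝ, f (r • Phi φ) = 0 := by
    intro φ
    apply f_vanish f hsupp
    have : (r • Phi φ).1^2 + (r • Phi φ).2^2 = r^2 := by
      simp only [Phi, Prod.smul_mk, smul_eq_mul]
      nlinarith [Real.sin_sq_add_cos_sq φ]
    rw [this]; exact hr
  simp [h]

lemma Fco_cont (f : ℝ × ℝ → ℂ) (hf : Continuous f) (n : ℤ) : Continuous (Fco f n) := by
  apply intervalIntegral.continuous_parametric_intervalIntegral_of_continuous'
    (f := fun r φ => f (r • Phi φ) * Complex.exp (-Complex.I * n * φ))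
  have : Continuous Phi := by unfold Phi; fun_prop
  fun_prop

lemma key_piece (R s : ℝ) (hs : |s| < R) (f : ℝ × ℝ → ℂ) (n : ℤ)
    (hsupp : tsupport f ⊆ {x : ℝ × ℝ | x.1 ^ 2 + x.2 ^ 2 < R ^ 2}) (w : ℝ → ℂ)
    (hint : IntegrableOn (fun t => Fco f n (Real.sqrt (s^2+t^2)) * w t) (Set.Ioi 0)) :
    ∫ t in Set.Ioi (0:ℝ), Fco f n (Real.sqrt (s^2+t^2)) * w t
      = ∫ r in Set.Ioo |s| R, ((r / Real.sqrt (r^2-s^2) : ℝ) : ℂ)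
          * (Fco f n r * w (Real.sqrt (r^2-s^2))) := by
  have hs0 : 0 ≤ |s| := abs_nonneg s
  have hR : 0 < R := lt_of_le_of_lt hs0 hs
  have hRs : 0 < R^2 - s^2 := by nlinarith [sq_abs s]
  set c := Real.sqrt (R^2 - s^2) with hc
  have hcpos : 0 < c := Real.sqrt_pos.2 hRs
  have hc2 : c^2 = R^2 - s^2 := Real.sq_sqrt hRs.le
  set g : ℝ → ℂ := fun t => Fco f n (Real.sqrt (s^2+t^2)) * w t with hgdef
  have hzero : ∀ t ∈ Set.Ici c, g t = 0 := by
    intro t ht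
    have ht' : c ≤ t := ht
    have h2 : R^2 ≤ (Real.sqrt (s^2+t^2))^2 := by
      rw [Real.sq_sqrt (by positivity)]; nlinarith [hcpos.le]
    simp only [hgdef, Fco_vanish f hsupp n h2, zero_mul]
  have hIci : ∫ t in Set.Ici c, g t = 0 := setIntegral_eq_zero_of_forall_eq_zero hzero
  have hdisj : Disjoint (Set.Ioo (0:ℝ) c) (Set.Ici c) :=
    Set.disjoint_left.mpr (fun x hx hx' => absurd hx.2 (not_lt.2 hx'))
  have hunion : ∫ t in Set.Ioi (0:ℝ), g t = ∫ t in Set.Ioo 0 c, g t := by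
    rw [← Set.Ioo_union_Ici_eq_Ioi hcpos,
      setIntegral_union hdisj measurableSet_Ici
        (hint.mono_set Set.Ioo_subset_Ioi_self)
        (hint.mono_set (fun x hx => lt_of_lt_of_le hcpos hx)),
      hIci, add_zero]
  set ψ : ℝ → ℝ := fun r => Real.sqrt (r^2 - s^2) with hψ
  have himg : ψ '' Set.Ioo |s| R = Set.Ioo 0 c := by
    ext y; constructor
    · rintro ⟨r, ⟨hr1, hr2⟩, rfl⟩
      have h2 : 0 < r^2 - s^2 := by nlinarith [sq_abs s]
      exact ⟨Real.sqrt_pos.2 h2, Real.sqrt_lt_sqrt h2.le (by nlinarith)⟩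
    · rintro ⟨hy1, hy2⟩
      have hy2' : y^2 < R^2 - s^2 := by nlinarith [hy1.le, hcpos.le]
      refine ⟨Real.sqrt (s^2 + y^2), ⟨?_, ?_⟩, ?_⟩
      · rw [← Real.sqrt_sq_eq_abs]
        exact Real.sqrt_lt_sqrt (sq_nonneg s) (by nlinarith)
      · calc Real.sqrt (s^2 + y^2) < Real.sqrt (R^2) := Real.sqrt_lt_sqrt (by positivity) (by nlinarith)
          _ = R := Real.sqrt_sq hR.le
      · show Real.sqrt ((Real.sqrt (s^2+y^2))^2 - s^2) = y
        rw [Real.sq_sqrt (by positivity), show s^2 + y^2 - s^2 = y^2 by ring, Real.sqrt_sq hy1.le]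
  have hderiv : ∀ r ∈ Set.Ioo |s| R,
      HasDerivWithinAt ψ (r / Real.sqrt (r^2 - s^2)) (Set.Ioo |s| R) r := by
    intro r hr
    have h2 : 0 < r^2 - s^2 := by nlinarith [sq_abs s, hr.1]
    have h1 : HasDerivAt (fun u : ℝ => u^2 - s^2) (2*r) r := by
      simpa using ((hasDerivAt_pow 2 r).sub_const (s^2))
    have h3 := (Real.hasDerivAt_sqrt h2.ne').comp r h1
    have h4 : 1 / (2 * Real.sqrt (r^2 - s^2)) * (2*r) = r / Real.sqrt (r^2 - s^2) := by
      have : Real.sqrt (r^2 - s^2) ≠ 0 := (Real.sqrt_pos.2 h2).ne'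
      field_simp
    rw [h4] at h3
    exact h3.hasDerivWithinAt
  have hinj : Set.InjOn ψ (Set.Ioo |s| R) := by
    intro a ha b hb hab
    have ha2 : 0 < a := lt_of_le_of_lt hs0 ha.1
    have hb2 : 0 < b := lt_of_le_of_lt hs0 hb.1
    have h1 : a^2 - s^2 = b^2 - s^2 := by
      have := congrArg (fun x : ℝ => x^2) hab
      simp only [hψ] at this
      rwa [Real.sq_sqrt (by nlinarith [sq_abs s, ha.1]), Real.sq_sqrt (by nlinarith [sq_abs s, hb.1])] at this
    have : a^2 = b^2 := by linarith
    calc a = Real.sqrt (a^2) := (Real.sqrt_sq ha2.le).symm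
      _ = Real.sqrt (b^2) := by rw [this]
      _ = b := Real.sqrt_sq hb2.le
  calc ∫ t in Set.Ioi (0:ℝ), g t = ∫ t in Set.Ioo 0 c, g t := hunion
    _ = ∫ t in ψ '' Set.Ioo |s| R, g t := by rw [himg]
    _ = ∫ r in Set.Ioo |s| R, |r / Real.sqrt (r^2 - s^2)| • g (ψ r) :=
        integral_image_eq_integral_abs_deriv_smul measurableSet_Ioo hderiv hinj g
    _ = ∫ r in Set.Ioo |s| R, ((r / Real.sqrt (r^2-s^2) : ℝ) : ℂ)
          * (Fco f n r * w (Real.sqrt (r^2-s^2))) := by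
        apply setIntegral_congr_fun measurableSet_Ioo
        intro r hr
        have hr0 : 0 < r := lt_of_le_of_lt hs0 hr.1
        have h2 : 0 < r^2 - s^2 := by nlinarith [sq_abs s, hr.1]
        have habs : |r / Real.sqrt (r^2 - s^2)| = r / Real.sqrt (r^2 - s^2) :=
          abs_of_pos (by positivity)
        have harg : Real.sqrt (s^2 + (ψ r)^2) = r := by
          show Real.sqrt (s^2 + (Real.sqrt (r^2-s^2))^2) = r
          rw [Real.sq_sqrt h2.le, show s^2 + (r^2 - s^2) = r^2 by ring, Real.sqrt_sq hr0.le]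
        have harg' : Real.sqrt (s^2 + (Real.sqrt (r^2-s^2))^2) = r := by
          rw [Real.sq_sqrt h2.le, show s^2 + (r^2 - s^2) = r^2 by ring, Real.sqrt_sq hr0.le]
        simp only [hgdef, hψ]
        rw [harg', habs, Complex.real_smul]

set_option maxHeartbeats 2000000 in
open Set Function in
lemma fubini_rotate (R μ : ℝ) (hR : 0 < R) (f : ℝ × ℝ → ℂ) (hf : Continuous f)
    (hsupp : tsupport f ⊆ {x : ℝ × ℝ | x.1 ^ 2 + x.2 ^ 2 < R ^ 2}) (n : ℤ) (s : ℝ) :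
    radonCoeff μ f n s
      = (1 / (2 * (π : ℂ))) * ∫ t : ℝ, Fco f n (Real.sqrt (s^2 + t^2)) *
          (Complex.exp (Complex.I * n * Complex.arg ((s:ℂ) + t * Complex.I))
            * (Real.exp (-μ * t) : ℂ)) := by
  have h2pi : (0:ℝ) ≤ 2 * π := by positivity
  set G : ℝ → ℝ → ℂ := fun α t =>
    f (s • Phi α + t • PhiPerp α) * (Real.exp (-μ * t) : ℂ)
      * Complex.exp (-Complex.I * n * α) with hG
  have hGcont : Continuous (Function.uncurry G) := by
    have h1 : Continuous Phi := Phi_cont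
    have h2 : Continuous PhiPerp := PhiPerp_cont
    apply Continuous.mul
    · apply Continuous.mul
      · exact hf.comp (by fun_prop)
      · fun_prop
    · fun_prop
  have hGsupp : Function.support (Function.uncurry G) ⊆ (univ ×ˢ Icc (-R) R : Set (ℝ × ℝ)) := by
    rw [Function.support_subset_iff']
    intro p hp
    have hp2 : R < |p.2| := by
      simp only [Set.mem_prod, Set.mem_univ, true_and, Set.mem_Icc, not_and_or, not_le] at hp
      rcases hp with h | h
      · exact lt_abs.2 (Or.inr (by linarith))
      · exact lt_abs.2 (Or.inl h)
    have hle : R^2 ≤ s^2 + p.2^2 := by nlinarith [sq_nonneg s, sq_abs p.2, hR.le]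
    have hz : f (s • Phi p.1 + p.2 • PhiPerp p.1) = 0 := by
      apply f_vanish f hsupp
      rw [normsq_point]; exact hle
    simp only [Function.uncurry, hG, hz, zero_mul]
  have hGint : Integrable (Function.uncurry G)
      ((volume.restrict (Ioc (0:ℝ) (2*π))).prod (volume : Measure ℝ)) := by
    have hmeq : (volume.restrict (Ioc (0:ℝ) (2*π))).prod (volume : Measure ℝ)
        = volume.restrict (Ioc (0:ℝ) (2*π) ×ˢ (univ : Set ℝ)) := by
      calc (volume.restrict (Ioc (0:ℝ) (2*π))).prod (volume : Measure ℝ)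
          = (volume.restrict (Ioc (0:ℝ) (2*π))).prod ((volume : Measure ℝ).restrict univ) := by
            rw [Measure.restrict_univ]
        _ = ((volume : Measure ℝ).prod (volume : Measure ℝ)).restrict (Ioc (0:ℝ) (2*π) ×ˢ univ) :=
            Measure.prod_restrict _ _
        _ = volume.restrict (Ioc (0:ℝ) (2*π) ×ˢ (univ : Set ℝ)) := by
            rw [← Measure.volume_eq_prod]
    rw [hmeq]
    have hind : (univ ×ˢ Icc (-R) R : Set (ℝ × ℝ)).indicator (Function.uncurry G)
        = Function.uncurry G := Set.indicator_eq_self.2 hGsupp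
    have hS : MeasurableSet (Ioc (0:ℝ) (2*π) ×ˢ (univ : Set ℝ)) :=
      measurableSet_Ioc.prod MeasurableSet.univ
    have hT : MeasurableSet (univ ×ˢ Icc (-R) R : Set (ℝ × ℝ)) :=
      MeasurableSet.univ.prod measurableSet_Icc
    refine (integrable_indicator_iff hS).mp ?_
    rw [← hind, Set.indicator_indicator]
    rw [integrable_indicator_iff (hS.inter hT)]
    refine IntegrableOn.mono_set (t := Icc (0:ℝ) (2*π) ×ˢ Icc (-R) R)
      (hGcont.continuousOn.integrableOn_compact (isCompact_Icc.prod isCompact_Icc)) ?_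
    rw [Set.prod_inter_prod, Set.inter_univ, Set.univ_inter]
    exact Set.prod_mono Set.Ioc_subset_Icc_self subset_rfl
  have hinner : ∀ t : ℝ, (∫ α in (0:ℝ)..(2*π), G α t)
      = Fco f n (Real.sqrt (s^2 + t^2)) *
          (Complex.exp (Complex.I * n * Complex.arg ((s:ℂ) + t * Complex.I))
            * (Real.exp (-μ * t) : ℂ)) := by
    intro t
    calc ∫ α in (0:ℝ)..(2*π), G α t
        = (∫ α in (0:ℝ)..(2*π), f ((Real.sqrt (s^2+t^2)) • Phi (α + Complex.arg ((s:ℂ) + t * Complex.I)))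
            * Complex.exp (-Complex.I * n * α)) * (Real.exp (-μ * t) : ℂ) := by
          rw [← intervalIntegral.integral_mul_const]
          apply intervalIntegral.integral_congr; intro α _
          simp only [hG]
          rw [point_eq s t α]; ring
      _ = (Complex.exp (Complex.I * n * Complex.arg ((s:ℂ) + t * Complex.I))
            * Fco f n (Real.sqrt (s^2+t^2))) * (Real.exp (-μ * t) : ℂ) := by
          rw [shift]
      _ = _ := by ring
  have hswap : ∫ α in Ioc (0:ℝ) (2*π), (∫ t : ℝ, G α t)
      = ∫ t : ℝ, ∫ α in Ioc (0:ℝ) (2*π), G α t :=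
    MeasureTheory.integral_integral_swap hGint
  calc radonCoeff μ f n s
      = (1 / (2 * (π : ℂ))) * ∫ α in (0:ℝ)..(2*π), (∫ t : ℝ, G α t) := by
        unfold radonCoeff expRadonNegC
        congr 1
        apply intervalIntegral.integral_congr; intro α _
        exact (MeasureTheory.integral_mul_const _ _).symm
    _ = (1 / (2 * (π : ℂ))) * ∫ t : ℝ, ∫ α in Ioc (0:ℝ) (2*π), G α t := by
        rw [intervalIntegral.integral_of_le h2pi, hswap]
    _ = _ := by
        congr 1
        apply integral_congr_ae
        filter_upwards with t
        rw [← intervalIntegral.integral_of_le h2pi]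
        exact hinner t

set_option maxHeartbeats 1000000 in
theorem radonCoeff_eq_abel
    (R μ : ℝ) (hR : 0 < R) (f : ℝ × ℝ → ℂ)
    (hf : ContDiff ℝ (⊤ : ℕ∞) f) (hsupp : tsupport f ⊆ {x : ℝ × ℝ | x.1 ^ 2 + x.2 ^ 2 < R ^ 2})
    (n : ℤ) (s : ℝ) (hs : |s| < R) :
    radonCoeff μ f n s =
      ∑ σ ∈ ({1, -1} : Finset ℝ),
        ∫ r in |s|..R,
          angCoeff f n r * (Real.exp (σ * μ * Real.sqrt (r ^ 2 - s ^ 2)) : ℂ) *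
            Complex.exp (-Complex.I * n * σ * Real.arccos (s / r)) *
            ((r / Real.sqrt (r ^ 2 - s ^ 2) : ℝ) : ℂ) := by
  have hf' : Continuous f := hf.continuous
  have hs0 : 0 ≤ |s| := abs_nonneg s
  -- the two "angle" weight functions
  set w₁ : ℝ → ℂ := fun t =>
    Complex.exp (Complex.I * n * Complex.arg ((s:ℂ) + (t:ℝ) * Complex.I)) * (Real.exp (-μ * t) : ℂ)
    with hw₁
  set w₂ : ℝ → ℂ := fun t =>
    Complex.exp (Complex.I * n * Complex.arg ((s:ℂ) + ((-t:ℝ):ℂ) * Complex.I)) * (Real.exp (-μ * -t) : ℂ)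
    with hw₂
  set H : ℝ → ℂ := fun t => Fco f n (Real.sqrt (s^2 + t^2)) * w₁ t with hH
  -- integrability of H
  have hgc : Continuous (fun t : ℝ => Fco f n (Real.sqrt (s^2+t^2)) * (Real.exp (-μ*t) : ℂ)) := by
    have h1 := Fco_cont f hf' n
    fun_prop
  have hgsupp : HasCompactSupport (fun t : ℝ => Fco f n (Real.sqrt (s^2+t^2)) * (Real.exp (-μ*t) : ℂ)) := by
    apply HasCompactSupport.intro (isCompact_Icc (a := -R) (b := R))
    intro t ht
    have ht' : R < |t| := by
      simp only [Set.mem_Icc, not_and_or, not_le] at ht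
      rcases ht with h | h
      · exact lt_abs.2 (Or.inr (by linarith))
      · exact lt_abs.2 (Or.inl h)
    have h2 : R^2 ≤ (Real.sqrt (s^2+t^2))^2 := by
      rw [Real.sq_sqrt (by positivity)]
      nlinarith [sq_abs t, sq_nonneg s, hR.le]
    simp [Fco_vanish f hsupp n h2]
  have hgint : Integrable (fun t : ℝ => Fco f n (Real.sqrt (s^2+t^2)) * (Real.exp (-μ*t) : ℂ)) :=
    hgc.integrable_of_hasCompactSupport hgsupp
  have hφm : AEStronglyMeasurable
      (fun t : ℝ => Complex.exp (Complex.I * n * Complex.arg ((s:ℂ) + (t:ℝ) * Complex.I))) volume := by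
    apply Measurable.aestronglyMeasurable
    apply Complex.measurable_exp.comp
    apply Measurable.const_mul
    exact Complex.measurable_ofReal.comp (Complex.measurable_arg.comp
      (show Continuous (fun t : ℝ => (s:ℂ) + (t:ℝ) * Complex.I) by fun_prop).measurable)
  have hφb : ∀ t : ℝ, ‖Complex.exp (Complex.I * n * (Complex.arg ((s:ℂ) + (t:ℝ) * Complex.I) : ℂ))‖ ≤ 1 := by
    intro t
    rw [Complex.norm_exp]
    have : (Complex.I * n * (Complex.arg ((s:ℂ) + (t:ℝ) * Complex.I) : ℂ)).re = 0 := by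
      simp [Complex.mul_re, Complex.mul_im]
    rw [this, Real.exp_zero]
  have hHint : Integrable H := by
    apply Integrable.congr (Integrable.bdd_mul (c := 1) hgint hφm (Filter.Eventually.of_forall hφb))
    filter_upwards with t
    simp only [hH, hw₁]; ring
  -- rewrite the left side via Fubini and rotation
  rw [fubini_rotate R μ hR f hf' hsupp n s]
  -- split the t-integral
  have hsplit : (∫ t : ℝ, H t) = (∫ t in Set.Iio (0:ℝ), H t) + ∫ t in Set.Ioi (0:ℝ), H t := by
    have h1 : (∫ t : ℝ, H t) = ∫ t in Set.Iio (0:ℝ) ∪ Set.Ioi 0, H t := by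
      rw [Set.Iio_union_Ioi, MeasureTheory.restrict_compl_singleton]
    rw [h1, setIntegral_union (show Disjoint (Set.Iio (0:ℝ)) (Set.Ioi 0) from
        Set.disjoint_left.mpr (fun x hx hx' => absurd (show x < 0 from hx) (not_lt.2 (show (0:ℝ) < x from hx').le)))
      measurableSet_Ioi hHint.integrableOn hHint.integrableOn]
  -- right piece
  have hright : ∫ t in Set.Ioi (0:ℝ), H t
      = ∫ r in Set.Ioo |s| R, ((r / Real.sqrt (r^2-s^2) : ℝ) : ℂ)
          * (Fco f n r * w₁ (Real.sqrt (r^2-s^2))) :=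
    key_piece R s hs f n hsupp w₁ hHint.integrableOn
  -- left piece
  have hHneg : (fun t : ℝ => H (-t)) = fun t => Fco f n (Real.sqrt (s^2+t^2)) * w₂ t := by
    funext t
    simp only [hH, hw₁, hw₂, neg_sq]
  have hneg : ∫ t in Set.Iio (0:ℝ), H t = ∫ t in Set.Ioi (0:ℝ), H (-t) := by
    rw [integral_comp_neg_Ioi, neg_zero, integral_Iic_eq_integral_Iio]
  have hHnegint : IntegrableOn (fun t => Fco f n (Real.sqrt (s^2+t^2)) * w₂ t) (Set.Ioi 0) := by
    rw [← hHneg]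
    exact (hHint.comp_neg).integrableOn
  have hleft : ∫ t in Set.Ioi (0:ℝ), H (-t)
      = ∫ r in Set.Ioo |s| R, ((r / Real.sqrt (r^2-s^2) : ℝ) : ℂ)
          * (Fco f n r * w₂ (Real.sqrt (r^2-s^2))) := by
    rw [show (fun t : ℝ => H (-t)) = fun t => Fco f n (Real.sqrt (s^2+t^2)) * w₂ t from hHneg]
    exact key_piece R s hs f n hsupp w₂ hHnegint
  -- evaluate the weights at ψ r for r ∈ Ioo |s| R
  have heval : ∀ r ∈ Set.Ioo |s| R, ∀ σ : ℝ, σ = 1 ∨ σ = -1 →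
      True := fun _ _ _ _ => trivial
  -- target rewrite
  have hang : ∀ (σ : ℝ),
      (∫ r in |s|..R, angCoeff f n r * (Real.exp (σ * μ * Real.sqrt (r ^ 2 - s ^ 2)) : ℂ) *
          Complex.exp (-Complex.I * n * σ * Real.arccos (s / r)) *
          ((r / Real.sqrt (r ^ 2 - s ^ 2) : ℝ) : ℂ))
      = (1 / (2 * (π:ℂ))) * ∫ r in Set.Ioo |s| R,
          Fco f n r * (Real.exp (σ * μ * Real.sqrt (r ^ 2 - s ^ 2)) : ℂ) *
          Complex.exp (-Complex.I * n * σ * Real.arccos (s / r)) *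
          ((r / Real.sqrt (r ^ 2 - s ^ 2) : ℝ) : ℂ) := by
    intro σ
    rw [intervalIntegral.integral_of_le hs.le, integral_Ioc_eq_integral_Ioo,
      ← MeasureTheory.integral_const_mul]
    apply setIntegral_congr_fun measurableSet_Ioo
    intro r _
    show angCoeff f n r * _ * _ * _ = _
    rw [show angCoeff f n r = (1 / (2 * (π:ℂ))) * Fco f n r from rfl]
    ring
  -- pointwise identification of integrands
  have hpt : ∀ r ∈ Set.Ioo |s| R,
      ((r / Real.sqrt (r^2-s^2) : ℝ) : ℂ) * (Fco f n r * w₁ (Real.sqrt (r^2-s^2)))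
      = Fco f n r * (Real.exp ((-1) * μ * Real.sqrt (r ^ 2 - s ^ 2)) : ℂ) *
          Complex.exp (-Complex.I * n * (-1) * Real.arccos (s / r)) *
          ((r / Real.sqrt (r ^ 2 - s ^ 2) : ℝ) : ℂ) := by
    intro r hr
    have hr0 : 0 < r := lt_of_le_of_lt hs0 hr.1
    have h2 : 0 < r^2 - s^2 := by nlinarith [sq_abs s, hr.1]
    have hψ : 0 < Real.sqrt (r^2 - s^2) := Real.sqrt_pos.2 h2
    have habs : ‖(s:ℂ) + (Real.sqrt (r^2-s^2) : ℝ) * Complex.I‖ = r := by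
      rw [Complex.norm_def, Complex.normSq_add_mul_I, Real.sq_sqrt h2.le,
        show s^2 + (r^2 - s^2) = r^2 by ring, Real.sqrt_sq hr0.le]
    have harg : Complex.arg ((s:ℂ) + (Real.sqrt (r^2-s^2) : ℝ) * Complex.I)
        = Real.arccos (s / r) := by
      rw [Complex.arg_of_im_pos (by simpa using hψ), habs]
      norm_num
    simp only [hw₁, harg]
    rw [show -μ * Real.sqrt (r^2-s^2) = (-1) * μ * Real.sqrt (r^2-s^2) by ring,
      show (Complex.I * n * (Real.arccos (s/r) : ℝ) : ℂ)
        = -Complex.I * n * (-1) * (Real.arccos (s/r) : ℝ) by ring]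
    ring
  have hpt2 : ∀ r ∈ Set.Ioo |s| R,
      ((r / Real.sqrt (r^2-s^2) : ℝ) : ℂ) * (Fco f n r * w₂ (Real.sqrt (r^2-s^2)))
      = Fco f n r * (Real.exp (1 * μ * Real.sqrt (r ^ 2 - s ^ 2)) : ℂ) *
          Complex.exp (-Complex.I * n * 1 * Real.arccos (s / r)) *
          ((r / Real.sqrt (r ^ 2 - s ^ 2) : ℝ) : ℂ) := by
    intro r hr
    have hr0 : 0 < r := lt_of_le_of_lt hs0 hr.1
    have h2 : 0 < r^2 - s^2 := by nlinarith [sq_abs s, hr.1]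
    have hψ : 0 < Real.sqrt (r^2 - s^2) := Real.sqrt_pos.2 h2
    have habs : ‖(s:ℂ) + ((-Real.sqrt (r^2-s^2) : ℝ):ℂ) * Complex.I‖ = r := by
      rw [Complex.norm_def, Complex.normSq_add_mul_I, neg_sq, Real.sq_sqrt h2.le,
        show s^2 + (r^2 - s^2) = r^2 by ring, Real.sqrt_sq hr0.le]
    have harg : Complex.arg ((s:ℂ) + ((-Real.sqrt (r^2-s^2) : ℝ):ℂ) * Complex.I)
        = -Real.arccos (s / r) := by
      rw [Complex.arg_of_im_neg (by simpa using hψ), habs]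
      norm_num
    simp only [hw₂, harg]
    rw [show -μ * -Real.sqrt (r^2-s^2) = 1 * μ * Real.sqrt (r^2-s^2) by ring,
      show (Complex.I * n * ((-Real.arccos (s/r) : ℝ) : ℂ) : ℂ)
        = -Complex.I * n * 1 * (Real.arccos (s/r) : ℝ) by push_cast; ring]
    ring
  -- assemble
  rw [show (∑ σ ∈ ({1, -1} : Finset ℝ),
        ∫ r in |s|..R,
          angCoeff f n r * (Real.exp (σ * μ * Real.sqrt (r ^ 2 - s ^ 2)) : ℂ) *
            Complex.exp (-Complex.I * n * σ * Real.arccos (s / r)) *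
            ((r / Real.sqrt (r ^ 2 - s ^ 2) : ℝ) : ℂ))
      = (∫ r in |s|..R,
          angCoeff f n r * (Real.exp ((1:ℝ) * μ * Real.sqrt (r ^ 2 - s ^ 2)) : ℂ) *
            Complex.exp (-Complex.I * n * (1:ℝ) * Real.arccos (s / r)) *
            ((r / Real.sqrt (r ^ 2 - s ^ 2) : ℝ) : ℂ))
        + (∫ r in |s|..R,
          angCoeff f n r * (Real.exp ((-1:ℝ) * μ * Real.sqrt (r ^ 2 - s ^ 2)) : ℂ) *
            Complex.exp (-Complex.I * n * (-1:ℝ) * Real.arccos (s / r)) *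
            ((r / Real.sqrt (r ^ 2 - s ^ 2) : ℝ) : ℂ)) by
      rw [Finset.sum_insert (by norm_num), Finset.sum_singleton]]
  rw [hang 1, hang (-1)]
  have hHint' : (∫ t : ℝ, H t) = (∫ t in Set.Iio (0:ℝ), H t) + ∫ t in Set.Ioi (0:ℝ), H t := hsplit
  calc (1 / (2 * (π:ℂ))) * ∫ t : ℝ, Fco f n (Real.sqrt (s^2 + t^2)) *
          (Complex.exp (Complex.I * n * Complex.arg ((s:ℂ) + t * Complex.I))
            * (Real.exp (-μ * t) : ℂ))
      = (1 / (2 * (π:ℂ))) * ∫ t : ℝ, H t := rfl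
    _ = (1 / (2 * (π:ℂ))) * ((∫ t in Set.Iio (0:ℝ), H t) + ∫ t in Set.Ioi (0:ℝ), H t) := by
        rw [hsplit]
    _ = (1 / (2 * (π:ℂ))) * ((∫ r in Set.Ioo |s| R,
            Fco f n r * (Real.exp (1 * μ * Real.sqrt (r ^ 2 - s ^ 2)) : ℂ) *
            Complex.exp (-Complex.I * n * 1 * Real.arccos (s / r)) *
            ((r / Real.sqrt (r ^ 2 - s ^ 2) : ℝ) : ℂ))
          + (∫ r in Set.Ioo |s| R,
            Fco f n r * (Real.exp ((-1) * μ * Real.sqrt (r ^ 2 - s ^ 2)) : ℂ) *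
            Complex.exp (-Complex.I * n * (-1) * Real.arccos (s / r)) *
            ((r / Real.sqrt (r ^ 2 - s ^ 2) : ℝ) : ℂ))) := by
        rw [hneg, hleft, hright,
          setIntegral_congr_fun measurableSet_Ioo hpt2,
          setIntegral_congr_fun measurableSet_Ioo hpt]
    _ = _ := by push_cast; ring
end
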